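/- Let Y : [0,T] → ℝ be continuous with Y extended by Y(s) = Y(T) for s > T, and let M := sup_{t∈[0,T]}|Y(t)| < ∞. Define Ỹ_t^n := e^{n(t−T)}(Y(t) − Y(T)) + ∫_t^T n e^{n(t−s)}(Y(t) − Y(s)) ds. Then for every ε > 0, δ ∈ (0,T), and n > 0: sup_{t∈[0,T−δ]} |Ỹ_t^n| ≤ 2M(e^{−nε} + e^{−nδ}) + sup_{t∈[0,T]} sup_{s∈[t,t+ε]} |Y(s) − Y(t)|. -/

import Mathlib

open MeasureTheory intervalIntegral

/-! The kernel `s ↦ n e^{n(t-s)}` has mass at most `1` on `[t, ∞)` and mass at most `e^{-nε}` on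
`[t + ε, ∞)`. Splitting `∫_t^T` at `min (t + ε) T`, the near part is therefore bounded by the
modulus of continuity of `Y` at scale `ε`, the far part by `e^{-nε} · 2M`, and the boundary term
by `e^{-nδ} · 2M` because `t - T ≤ -δ`. -/

open Real Set

theorem integral_mul_exp_mul_sub (n t a b : ℝ) :
    ∫ s in a..b, n * exp (n * (t - s)) = exp (n * (t - a)) - exp (n * (t - b)) := by
  have hderiv : ∀ s, HasDerivAt (fun s => -exp (n * (t - s))) (n * exp (n * (t - s))) s :=
    fun s => ((((hasDerivAt_id' s).const_sub t).const_mul n).exp).neg.congr_deriv (by ring)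
  rw [integral_eq_sub_of_hasDerivAt (fun s _ => hderiv s)
    ((by fun_prop : Continuous fun s => n * exp (n * (t - s))).intervalIntegrable a b)]
  ring

theorem abs_sub_le_two_mul {M x y : ℝ} (hx : |x| ≤ M) (hy : |y| ≤ M) : |x - y| ≤ 2 * M :=
  (abs_sub x y).trans (by linarith)

theorem abs_integral_mul_exp_mul_sub_mul_le {n t a b C : ℝ} {f : ℝ → ℝ} (hn : 0 ≤ n)
    (hab : a ≤ b) (hf : ∀ s ∈ Ioc a b, |f s| ≤ C) :
    |∫ s in a..b, n * exp (n * (t - s)) * f s| ≤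
      (exp (n * (t - a)) - exp (n * (t - b))) * C := by
  calc |∫ s in a..b, n * exp (n * (t - s)) * f s|
      ≤ ∫ s in a..b, n * exp (n * (t - s)) * C := by
        rw [← Real.norm_eq_abs]
        refine norm_integral_le_of_norm_le hab (ae_of_all _ fun s hs => ?_)
          ((by fun_prop : Continuous fun s => n * exp (n * (t - s)) * C).intervalIntegrable a b)
        rw [Real.norm_eq_abs, abs_mul, abs_of_nonneg (by positivity)]
        exact mul_le_mul_of_nonneg_left (hf s hs) (by positivity)
    _ = (exp (n * (t - a)) - exp (n * (t - b))) * C := by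
        rw [intervalIntegral.integral_mul_const, integral_mul_exp_mul_sub]

theorem exp_mul_sub_min_sub_exp_le (n t ε T : ℝ) :
    exp (n * (t - min (t + ε) T)) - exp (n * (t - T)) ≤ exp (-n * ε) := by
  rcases min_cases (t + ε) T with ⟨hc, -⟩ | ⟨hc, -⟩ <;> rw [hc]
  · rw [show n * (t - (t + ε)) = -n * ε by ring]
    linarith [exp_pos (n * (t - T))]
  · linarith [exp_pos (-n * ε)]

noncomputable def modulusOfContinuity (Y : ℝ → ℝ) (T ε : ℝ) : ℝ :=
  sSup {x : ℝ | ∃ t ∈ Icc 0 T, ∃ s ∈ Icc t (t + ε), x = |Y s - Y t|}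

section modulusOfContinuity

variable {Y : ℝ → ℝ} {M T ε : ℝ}

theorem abs_sub_le_modulusOfContinuity (hM : ∀ t, 0 ≤ t → |Y t| ≤ M) {t s : ℝ}
    (ht : t ∈ Icc 0 T) (hs : s ∈ Icc t (t + ε)) :
    |Y s - Y t| ≤ modulusOfContinuity Y T ε := by
  refine le_csSup ⟨2 * M, ?_⟩ ⟨t, ht, s, hs, rfl⟩
  rintro x ⟨t, ⟨ht0, -⟩, s, ⟨hts, -⟩, rfl⟩
  exact abs_sub_le_two_mul (hM s (ht0.trans hts)) (hM t ht0)

theorem modulusOfContinuity_nonneg : 0 ≤ modulusOfContinuity Y T ε :=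
  Real.sSup_nonneg fun _ ⟨_, _, _, _, hx⟩ => hx ▸ abs_nonneg _

end modulusOfContinuity

theorem penalization_error_estimate_general
    (T M n ε δ : ℝ) (hn : 0 < n) (hε : 0 < ε)
    (hδ0 : 0 < δ)
    (Y : ℝ → ℝ) (hY : Continuous Y)
    (hM : ∀ t : ℝ, 0 ≤ t → |Y t| ≤ M) :
    ∀ t ∈ Set.Icc 0 (T - δ),
      |Real.exp (n * (t - T)) * (Y t - Y T) +
          ∫ s in t..T, n * Real.exp (n * (t - s)) * (Y t - Y s)| ≤
        2 * M * (Real.exp (-n * ε) + Real.exp (-n * δ)) +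
          sSup {x : ℝ | ∃ t' ∈ Set.Icc 0 T, ∃ s ∈ Set.Icc t' (t' + ε), x = |Y s - Y t'|} := by
  rintro t ⟨ht0, htδ⟩
  change _ ≤ _ + modulusOfContinuity Y T ε
  have htT : t ≤ T := by linarith
  set c := min (t + ε) T
  have htc : t ≤ c := le_min (by linarith) htT
  have hcT : c ≤ T := min_le_right _ _
  have hint : ∀ a b, IntervalIntegrable (fun s => n * exp (n * (t - s)) * (Y t - Y s)) volume a b :=
    fun a b => (by fun_prop : Continuous _).intervalIntegrable a b
  rw [← integral_add_adjacent_intervals (hint t c) (hint c T), ← add_assoc]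
  have hboundary : |exp (n * (t - T)) * (Y t - Y T)| ≤ exp (-n * δ) * (2 * M) := by
    rw [abs_mul, abs_of_pos (exp_pos _)]
    exact mul_le_mul (exp_le_exp.mpr (by nlinarith)) (abs_sub_le_two_mul (hM t ht0)
      (hM T (by linarith))) (abs_nonneg _) (exp_pos _).le
  have hnear : |∫ s in t..c, n * exp (n * (t - s)) * (Y t - Y s)| ≤ modulusOfContinuity Y T ε := by
    have hω : 0 ≤ modulusOfContinuity Y T ε := modulusOfContinuity_nonneg
    refine (abs_integral_mul_exp_mul_sub_mul_le (C := modulusOfContinuity Y T ε) hn.le htc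
      fun s hs => ?_).trans ?_
    · rw [abs_sub_comm]
      exact abs_sub_le_modulusOfContinuity hM ⟨ht0, htT⟩ ⟨hs.1.le, hs.2.trans (min_le_left _ _)⟩
    · rw [sub_self, mul_zero, exp_zero]
      nlinarith [exp_pos (n * (t - c))]
  have hfar : |∫ s in c..T, n * exp (n * (t - s)) * (Y t - Y s)| ≤ exp (-n * ε) * (2 * M) := by
    refine (abs_integral_mul_exp_mul_sub_mul_le hn.le hcT fun s hs =>
      abs_sub_le_two_mul (hM t ht0) (hM s (by linarith [hs.1]))).trans ?_
    have hM0 : 0 ≤ M := (abs_nonneg _).trans (hM t ht0)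
    exact mul_le_mul_of_nonneg_right (exp_mul_sub_min_sub_exp_le n t ε T) (by positivity)
  linarith [abs_add_three (exp (n * (t - T)) * (Y t - Y T))
    (∫ s in t..c, n * exp (n * (t - s)) * (Y t - Y s))
    (∫ s in c..T, n * exp (n * (t - s)) * (Y t - Y s))]

/-- The pathwise penalization-error estimate from Lemma 3.8:
sup_{t∈[0,T−δ]} |Ỹ_t^n| ≤ 2M(e^{−nε} + e^{−nδ}) + modulus of continuity term. -/
theorem penalization_error_estimate
    (T M n ε δ : ℝ) (hT : 0 < T) (hn : 0 < n) (hε : 0 < ε)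
    (hδ0 : 0 < δ) (hδT : δ < T)
    (Y : ℝ → ℝ) (hY : Continuous Y)
    (hext : ∀ s, T ≤ s → Y s = Y T)
    (hM : ∀ t : ℝ, 0 ≤ t → |Y t| ≤ M) :
    ∀ t ∈ Set.Icc 0 (T - δ),
      |Real.exp (n * (t - T)) * (Y t - Y T) +
          ∫ s in t..T, n * Real.exp (n * (t - s)) * (Y t - Y s)| ≤
        2 * M * (Real.exp (-n * ε) + Real.exp (-n * δ)) +
          sSup {x : ℝ | ∃ t' ∈ Set.Icc 0 T, ∃ s ∈ Set.Icc t' (t' + ε), x = |Y s - Y t'|} :=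
  penalization_error_estimate_general T M n ε δ hn hε hδ0 Y hY hM
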